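/- Let A_1, …, A_{m−1} be a skew Clifford system on ℝ^{n+1} and let F(x,y) = ⟨x,y⟩² + Σ_{q=1}^{m−1} ⟨A_q x, y⟩². For x, y ∈ ℝ^{n+1} with ‖x‖ = ‖y‖ = 1, the two components of the tangential gradient of F have equal length: ‖(∂F/∂x)(x,y) − 2F(x,y)·x‖² = ‖(∂F/∂y)(x,y) − 2F(x,y)·y‖² = 4F(x,y)(1 − F(x,y)). (This says every regular level set of F in S^n × S^n is an isonormal hypersurface, i.e. Urbano's angle function C = ⟨PN, N⟩ vanishes identically on it.) -/

import Mathlib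

open Matrix
open scoped RealInnerProductSpace BigOperators

noncomputable section

/-- A skew Clifford system `A_1, …, A_{m-1}` on `ℝ^N`: skew-symmetric matrices with
`A_p A_q + A_q A_p = -2 δ_{pq} Id`. -/
def IsSkewCliffordSystem {N m : ℕ} (A : Fin (m - 1) → Matrix (Fin N) (Fin N) ℝ) : Prop :=
  (∀ p q, A p * A q + A q * A p =
      if p = q then (-2 : ℝ) • (1 : Matrix (Fin N) (Fin N) ℝ) else 0) ∧
  (∀ p, (A p)ᵀ = -A p)

/-- The action of a matrix on Euclidean space. -/
def act {N : ℕ} (A : Matrix (Fin N) (Fin N) ℝ) (x : EuclideanSpace ℝ (Fin N)) :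
    EuclideanSpace ℝ (Fin N) :=
  Matrix.toEuclideanLin A x

/-- The splitting form of the FKM isoparametric polynomial:
`F(x,y) = ⟨x,y⟩² + Σ_q ⟨A_q x, y⟩²`. -/
def FKM {N m : ℕ} (A : Fin (m - 1) → Matrix (Fin N) (Fin N) ℝ)
    (x y : EuclideanSpace ℝ (Fin N)) : ℝ :=
  ⟪x, y⟫ ^ 2 + ∑ q, ⟪act (A q) x, y⟫ ^ 2

/-!
For a unit vector `x`, the Clifford relations and skew-symmetry make `x, A_1 x, …, A_{m-1} x`
an orthonormal family `w`, and `F(x, ·) = ∑ j ⟪w j, ·⟫²`. So `∂F/∂y = 2g`, where `g` is the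
orthogonal projection of `y` onto the span of `w`, and for a unit vector `y` we have
`‖g‖² = ⟪g, y⟫ = F`; expanding gives `‖2g - 2F y‖² = 4F - 8F² + 4F² = 4F(1 - F)`.
Skew-symmetry also makes `F` symmetric in `x` and `y`, which handles the `x`-component.
-/

section InnerProductSpace

variable {ι E : Type*} [Fintype ι] [NormedAddCommGroup E] [InnerProductSpace ℝ E]

theorem hasGradientAt_inner_sq [CompleteSpace E] (w y : E) :
    HasGradientAt (fun y' => ⟪w, y'⟫ ^ 2) ((2 * ⟪w, y⟫) • w) y := by
  rw [hasGradientAt_iff_hasFDerivAt]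
  refine ((innerSL ℝ w).hasFDerivAt (x := y)).pow 2 |>.congr_fderiv ?_
  ext v
  simp

theorem hasGradientAt_sum_inner_sq [CompleteSpace E] (w : ι → E) (y : E) :
    HasGradientAt (fun y' => ∑ i, ⟪w i, y'⟫ ^ 2) (∑ i, (2 * ⟪w i, y⟫) • w i) y := by
  rw [hasGradientAt_iff_hasFDerivAt, map_sum]
  exact HasFDerivAt.fun_sum fun i _ => (hasGradientAt_inner_sq (w i) y).hasFDerivAt

theorem Orthonormal.norm_sum_two_inner_smul_sub_sq {w : ι → E} (hw : Orthonormal ℝ w) {y : E}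
    (hy : ‖y‖ = 1) :
    ‖∑ i, (2 * ⟪w i, y⟫) • w i - (2 * ∑ i, ⟪w i, y⟫ ^ 2) • y‖ ^ 2 =
      4 * (∑ i, ⟪w i, y⟫ ^ 2) * (1 - ∑ i, ⟪w i, y⟫ ^ 2) := by
  set F := ∑ i, ⟪w i, y⟫ ^ 2
  have h_norm : ‖∑ i, (2 * ⟪w i, y⟫) • w i‖ ^ 2 = 4 * F := by
    rw [← real_inner_self_eq_norm_sq, hw.inner_sum, Finset.mul_sum]
    exact Finset.sum_congr rfl fun i _ => by simp only [conj_trivial]; ring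
  have h_inner : ⟪∑ i, (2 * ⟪w i, y⟫) • w i, y⟫ = 2 * F := by
    simp only [sum_inner, real_inner_smul_left, F, Finset.mul_sum]
    exact Finset.sum_congr rfl fun i _ => by ring
  rw [norm_sub_sq_real, h_norm, real_inner_smul_right, h_inner, norm_smul, mul_pow, hy,
    Real.norm_eq_abs, sq_abs]
  ring

theorem Orthonormal.norm_gradient_sum_inner_sq_sub_sq [CompleteSpace E] {w : ι → E}
    (hw : Orthonormal ℝ w) {y : E} (hy : ‖y‖ = 1) :
    ‖gradient (fun y' => ∑ i, ⟪w i, y'⟫ ^ 2) y - (2 * ∑ i, ⟪w i, y⟫ ^ 2) • y‖ ^ 2 =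
      4 * (∑ i, ⟪w i, y⟫ ^ 2) * (1 - ∑ i, ⟪w i, y⟫ ^ 2) := by
  rw [(hasGradientAt_sum_inner_sq w y).gradient, hw.norm_sum_two_inner_smul_sub_sq hy]

end InnerProductSpace

section SkewCliffordSystem

variable {N : ℕ}

@[simp]
theorem act_add (B C : Matrix (Fin N) (Fin N) ℝ) (u : EuclideanSpace ℝ (Fin N)) :
    act (B + C) u = act B u + act C u := by
  simp [act]

@[simp]
theorem act_mul (B C : Matrix (Fin N) (Fin N) ℝ) (u : EuclideanSpace ℝ (Fin N)) :
    act (B * C) u = act B (act C u) := by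
  simp [act, Matrix.toLpLin_apply, Matrix.mulVec_mulVec]

@[simp]
theorem act_neg (B : Matrix (Fin N) (Fin N) ℝ) (u : EuclideanSpace ℝ (Fin N)) :
    act (-B) u = -act B u := by
  simp [act]

theorem inner_act_left (B : Matrix (Fin N) (Fin N) ℝ) (u v : EuclideanSpace ℝ (Fin N)) :
    ⟪act B u, v⟫ = ⟪u, act Bᵀ v⟫ := by
  rw [act, act, ← conjTranspose_eq_transpose_of_trivial,
    Matrix.toEuclideanLin_conjTranspose_eq_adjoint, LinearMap.adjoint_inner_right]

theorem inner_act_right_of_transpose_eq_neg {B : Matrix (Fin N) (Fin N) ℝ} (hB : Bᵀ = -B)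
    (u v : EuclideanSpace ℝ (Fin N)) : ⟪u, act B v⟫ = -⟪act B u, v⟫ := by
  rw [inner_act_left, hB, act_neg, inner_neg_right, neg_neg]

theorem inner_act_self_of_transpose_eq_neg {B : Matrix (Fin N) (Fin N) ℝ} (hB : Bᵀ = -B)
    (u : EuclideanSpace ℝ (Fin N)) : ⟪u, act B u⟫ = 0 := by
  linarith [inner_act_right_of_transpose_eq_neg hB u u, real_inner_comm (act B u) u]

namespace IsSkewCliffordSystem

variable {m : ℕ} {A : Fin (m - 1) → Matrix (Fin N) (Fin N) ℝ}

theorem inner_act_act (hA : IsSkewCliffordSystem A) (u : EuclideanSpace ℝ (Fin N))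
    (p q : Fin (m - 1)) :
    ⟪act (A p) u, act (A q) u⟫ = if p = q then ⟪u, u⟫ else 0 := by
  have h_anticomm : ⟪u, act (A p * A q + A q * A p) u⟫ = -2 * ⟪act (A p) u, act (A q) u⟫ := by
    rw [act_add, act_mul, act_mul, inner_add_right,
      inner_act_right_of_transpose_eq_neg (hA.2 p) u (act (A q) u),
      inner_act_right_of_transpose_eq_neg (hA.2 q) u (act (A p) u), real_inner_comm (act (A q) u)]
    ring
  rw [hA.1 p q] at h_anticomm
  rcases eq_or_ne p q with rfl | hpq
  · simpa [act, real_inner_smul_right, eq_comm] using h_anticomm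
  · simpa [act, hpq] using h_anticomm

end IsSkewCliffordSystem

end SkewCliffordSystem

section FKM

variable {N m : ℕ} {A : Fin (m - 1) → Matrix (Fin N) (Fin N) ℝ}

def cliffordFrame (A : Fin (m - 1) → Matrix (Fin N) (Fin N) ℝ) (x : EuclideanSpace ℝ (Fin N)) :
    Option (Fin (m - 1)) → EuclideanSpace ℝ (Fin N) :=
  fun j => j.elim x fun q => act (A q) x

theorem IsSkewCliffordSystem.orthonormal_cliffordFrame (hA : IsSkewCliffordSystem A)
    {x : EuclideanSpace ℝ (Fin N)} (hx : ‖x‖ = 1) : Orthonormal ℝ (cliffordFrame A x) := by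
  have hxx : ⟪x, x⟫ = 1 := by rw [real_inner_self_eq_norm_sq, hx, one_pow]
  rw [orthonormal_iff_ite]
  rintro (_ | p) (_ | q)
  · simpa [cliffordFrame] using hxx
  · simpa [cliffordFrame] using inner_act_self_of_transpose_eq_neg (hA.2 q) x
  · simpa [cliffordFrame, real_inner_comm x] using inner_act_self_of_transpose_eq_neg (hA.2 p) x
  · simpa [cliffordFrame, hx] using hA.inner_act_act x p q

theorem FKM_eq_sum_cliffordFrame (A : Fin (m - 1) → Matrix (Fin N) (Fin N) ℝ)
    (x y : EuclideanSpace ℝ (Fin N)) :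
    FKM A x y = ∑ j, ⟪cliffordFrame A x j, y⟫ ^ 2 := by
  simp [FKM, cliffordFrame, Fintype.sum_option]

theorem FKM_comm (hA : ∀ q, (A q)ᵀ = -A q) (x y : EuclideanSpace ℝ (Fin N)) :
    FKM A x y = FKM A y x := by
  unfold FKM
  rw [real_inner_comm x y]
  congr 1
  refine Finset.sum_congr rfl fun q _ => ?_
  rw [real_inner_comm x, inner_act_right_of_transpose_eq_neg (hA q), neg_sq]

theorem IsSkewCliffordSystem.norm_gradient_FKM_right_sub_sq (hA : IsSkewCliffordSystem A)
    {x y : EuclideanSpace ℝ (Fin N)} (hx : ‖x‖ = 1) (hy : ‖y‖ = 1) :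
    ‖gradient (fun y' => FKM A x y') y - (2 * FKM A x y) • y‖ ^ 2 =
      4 * FKM A x y * (1 - FKM A x y) := by
  simp only [FKM_eq_sum_cliffordFrame A x]
  exact (hA.orthonormal_cliffordFrame hx).norm_gradient_sum_inner_sq_sub_sq hy

end FKM

theorem stmt6_general (n m : ℕ)
    (A : Fin (m - 1) → Matrix (Fin (n + 1)) (Fin (n + 1)) ℝ)
    (hA : IsSkewCliffordSystem A)
    (x y : EuclideanSpace ℝ (Fin (n + 1))) (hx : ‖x‖ = 1) (hy : ‖y‖ = 1) :
    ‖gradient (fun x' => FKM A x' y) x - (2 * FKM A x y) • x‖ ^ 2 =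
        4 * FKM A x y * (1 - FKM A x y) ∧
    ‖gradient (fun y' => FKM A x y') y - (2 * FKM A x y) • y‖ ^ 2 =
        4 * FKM A x y * (1 - FKM A x y) := by
  refine ⟨?_, hA.norm_gradient_FKM_right_sub_sq hx hy⟩
  simp only [FKM_comm hA.2 _ y]
  exact hA.norm_gradient_FKM_right_sub_sq hy hx

/-- for `‖x‖ = ‖y‖ = 1`, the two components of the tangential gradient of
`F` have equal length: `‖∂F/∂x − 2F x‖² = ‖∂F/∂y − 2F y‖² = 4F(1 − F)`, where `∂F/∂x`,
`∂F/∂y` are the gradients of `F` in the `x`- and `y`-variables.  (Every regular level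
set of `F` in `S^n × S^n` is an isonormal hypersurface.) -/
theorem stmt6 (n m : ℕ) (hn : 1 ≤ n) (hm : 1 ≤ m)
    (A : Fin (m - 1) → Matrix (Fin (n + 1)) (Fin (n + 1)) ℝ)
    (hA : IsSkewCliffordSystem A)
    (x y : EuclideanSpace ℝ (Fin (n + 1))) (hx : ‖x‖ = 1) (hy : ‖y‖ = 1) :
    ‖gradient (fun x' => FKM A x' y) x - (2 * FKM A x y) • x‖ ^ 2 =
        4 * FKM A x y * (1 - FKM A x y) ∧
    ‖gradient (fun y' => FKM A x y') y - (2 * FKM A x y) • y‖ ^ 2 =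
        4 * FKM A x y * (1 - FKM A x y) :=
  stmt6_general n m A hA x y hx hy
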